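/- arXiv:2010.07334 — 5 statements merged into one kernel-verified Lean document; each statement's English description precedes it below -/
import Mathlib

section
/- Let f : ℝ^n → ℝ be differentiable with L-Lipschitz gradient and satisfy the Polyak–Łojasiewicz condition with constant μ > 0, and assume the set X* of global minimizers of f is nonempty. Then f satisfies the Error Bound condition with constant μ: for every x, ‖∇f(x)‖ ≥ μ·‖x_p − x‖, where x_p is the projection of x onto X* (i.e., ‖x_p − x‖ = dist(x, X*)). -/
/-!
Put `g = √(f - f*)`. By PL, at every point outside `X*` the function `g` decreases along `-∇f`
at rate `‖∇f‖ / (2 g) ≥ √(μ/2)`. Hence, for `δ < √(μ/2)`, a minimizer `y` of `g z + δ‖z - x‖`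
(which exists since closed balls are compact) must lie in `X*`, and comparing with `z = x` gives
`δ · dist(x, X*) ≤ g x`. This quadratic growth `(μ/2) dist(x, X*)² ≤ f x - f*`, combined with PL
at `x`, yields `μ · dist(x, X*) ≤ ‖∇f x‖`.
-/

open Metric Filter Set Topology

theorem exists_eq_zero_mul_dist_le_of_descent {X : Type*} [PseudoMetricSpace X] [ProperSpace X]
    {g : X → ℝ} (hg : Continuous g) (hg0 : ∀ z, 0 ≤ g z) {δ : ℝ} (hδ : 0 < δ)
    (hdesc : ∀ y, 0 < g y → ∃ z, g z + δ * dist z y < g y) (x : X) :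
    ∃ y, g y = 0 ∧ δ * dist y x ≤ g x := by
  set h : X → ℝ := fun z ↦ g z + δ * dist z x
  have hh : Continuous h := hg.add (continuous_const.mul (continuous_id.dist continuous_const))
  have hx : x ∈ closedBall x (g x / δ) := mem_closedBall_self (div_nonneg (hg0 x) hδ.le)
  obtain ⟨y, -, hy⟩ := (isCompact_closedBall x (g x / δ)).exists_isMinOn ⟨x, hx⟩ hh.continuousOn
  have hyx : h y ≤ g x := by simpa [h] using hy hx
  -- outside the ball, `h` already exceeds `h x = g x`, so `y` minimizes `h` globally
  have hmin : ∀ z, h y ≤ h z := by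
    intro z
    by_cases hz : z ∈ closedBall x (g x / δ)
    · exact hy hz
    · have : g x < δ * dist z x := by
        rw [mem_closedBall, not_le, div_lt_iff₀ hδ] at hz; linarith
      linarith [hg0 z, show h z = g z + δ * dist z x from rfl]
  refine ⟨y, ?_, by linarith [hg0 y, show h y = g y + δ * dist y x from rfl]⟩
  by_contra hne
  obtain ⟨z, hz⟩ := hdesc y (lt_of_le_of_ne (hg0 y) (Ne.symm hne))
  have htri := mul_le_mul_of_nonneg_left (dist_triangle z y x) hδ.le
  have : h z < h y := by simp only [h]; linarith
  exact (hmin z).not_gt this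

theorem exists_pos_lt_of_hasDerivAt_neg {φ : ℝ → ℝ} {φ' : ℝ} (hφ : HasDerivAt φ φ' 0)
    (hneg : φ' < 0) : ∃ t > 0, φ t < φ 0 := by
  obtain ⟨t, ht, ht0⟩ := ((hφ.hasDerivWithinAt.liminf_right_slope_le hneg).and_eventually
    self_mem_nhdsWithin).exists
  refine ⟨t, ht0, ?_⟩
  rw [slope_def_field, div_neg_iff] at ht
  rcases ht with ⟨-, h⟩ | ⟨h, -⟩ <;> linarith

variable {E : Type*} [NormedAddCommGroup E] [InnerProductSpace ℝ E]

theorem exists_sqrt_sub_add_mul_dist_lt [CompleteSpace E] {f : E → ℝ} {y : E} {fstar δ : ℝ}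
    (hf : DifferentiableAt ℝ f y) (hy : fstar < f y) (hδ : 0 ≤ δ)
    (hgrad : 2 * δ * √(f y - fstar) < ‖gradient f y‖) :
    ∃ z, √(f z - fstar) + δ * dist z y < √(f y - fstar) := by
  set G := gradient f y
  have hG : 0 < ‖G‖ := lt_of_le_of_lt (by positivity) hgrad
  have ha : 0 < √(f y - fstar) := Real.sqrt_pos.2 (sub_pos.2 hy)
  have hline : HasDerivAt (fun t : ℝ ↦ f (y + t • -G) - fstar) (-‖G‖ ^ 2) 0 := by
    have h := hf.hasGradientAt.hasFDerivAt.hasLineDerivAt (-G)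
    rw [map_neg, InnerProductSpace.toDual_apply_apply, real_inner_self_eq_norm_sq] at h
    exact h.sub_const fstar
  have hφ : HasDerivAt (fun t : ℝ ↦ √(f (y + t • -G) - fstar) + δ * (t * ‖G‖))
      (-‖G‖ ^ 2 / (2 * √(f y - fstar)) + δ * (1 * ‖G‖)) 0 := by
    refine (hline.sqrt ?_).add (((hasDerivAt_id 0).mul_const ‖G‖).const_mul δ) |>.congr_deriv ?_
    · simpa using (sub_pos.2 hy).ne'
    · simp
  have hneg : -‖G‖ ^ 2 / (2 * √(f y - fstar)) + δ * (1 * ‖G‖) < 0 := by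
    have : δ * ‖G‖ < ‖G‖ ^ 2 / (2 * √(f y - fstar)) := by
      rw [lt_div_iff₀ (by positivity)]; nlinarith
    linarith [neg_div (2 * √(f y - fstar)) (‖G‖ ^ 2)]
  obtain ⟨t, ht, hlt⟩ := exists_pos_lt_of_hasDerivAt_neg hφ hneg
  refine ⟨y + t • -G, ?_⟩
  have hdist : dist (y + t • -G) y = t * ‖G‖ := by
    rw [dist_eq_norm, add_sub_cancel_left, norm_smul, norm_neg, Real.norm_of_nonneg ht.le]
  rw [hdist]
  simpa using hlt

theorem mul_sq_infDist_le_of_pl [ProperSpace E] {f : E → ℝ} {μ fstar : ℝ} (hμ : 0 < μ)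
    (hf : Differentiable ℝ f) (hlb : ∀ z, fstar ≤ f z)
    (hPL : ∀ x, μ * (f x - fstar) ≤ 1 / 2 * ‖gradient f x‖ ^ 2) (x : E) :
    μ / 2 * infDist x {z | f z = fstar} ^ 2 ≤ f x - fstar := by
  set D := infDist x {z | f z = fstar}
  have hg : Continuous fun z ↦ √(f z - fstar) := (hf.continuous.sub continuous_const).sqrt
  have hrate : ∀ δ, 0 < δ → δ < √(μ / 2) → δ * D ≤ √(f x - fstar) := by
    intro δ hδ0 hδ
    have hδsq : δ ^ 2 < μ / 2 := (Real.lt_sqrt hδ0.le).1 hδ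
    have hdesc : ∀ y, 0 < √(f y - fstar) →
        ∃ z, √(f z - fstar) + δ * dist z y < √(f y - fstar) := by
      intro y hy
      have ha : 0 < f y - fstar := Real.sqrt_pos.1 hy
      refine exists_sqrt_sub_add_mul_dist_lt (hf y) (sub_pos.1 ha) hδ0.le ?_
      refine lt_of_pow_lt_pow_left₀ 2 (norm_nonneg _) ?_
      rw [mul_pow, Real.sq_sqrt ha.le]
      nlinarith [hPL y]
    obtain ⟨y, hy0, hyx⟩ :=
      exists_eq_zero_mul_dist_le_of_descent hg (fun _ ↦ Real.sqrt_nonneg _) hδ0 hdesc x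
    have hy : f y = fstar := le_antisymm (sub_nonpos.1 (Real.sqrt_eq_zero'.1 hy0)) (hlb y)
    calc δ * D ≤ δ * dist y x := by
          gcongr; rw [dist_comm]; exact infDist_le_dist_of_mem hy
      _ ≤ √(f x - fstar) := hyx
  have hlim : Tendsto (fun δ ↦ δ ^ 2 * D ^ 2) (𝓝[<] √(μ / 2)) (𝓝 (μ / 2 * D ^ 2)) := by
    have hcont : Continuous fun δ : ℝ ↦ δ ^ 2 * D ^ 2 := by fun_prop
    convert (hcont.tendsto √(μ / 2)).mono_left nhdsWithin_le_nhds using 2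
    rw [Real.sq_sqrt (by positivity)]
  refine le_of_tendsto hlim ?_
  filter_upwards [Ioo_mem_nhdsLT (Real.sqrt_pos.2 (half_pos hμ))] with δ ⟨hδ0, hδ⟩
  rw [← mul_pow, ← Real.sq_sqrt (sub_nonneg.2 (hlb x))]
  exact pow_le_pow_left₀ (mul_nonneg hδ0.le infDist_nonneg) (hrate δ hδ0 hδ) 2

theorem pl_implies_error_bound_general (n : ℕ) (f : EuclideanSpace ℝ (Fin n) → ℝ)
    (μ : ℝ) (hμ : 0 < μ)
    (hdiff : Differentiable ℝ f)
    (fstar : ℝ) (hfstar : IsLeast (Set.range f) fstar)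
    (hPL : ∀ x, μ * (f x - fstar) ≤ (1 / 2) * ‖gradient f x‖ ^ 2)
    (Xstar : Set (EuclideanSpace ℝ (Fin n))) (hXstar : Xstar = {z | f z = fstar})
    (x xp : EuclideanSpace ℝ (Fin n))
    (hproj : ‖xp - x‖ = Metric.infDist x Xstar) :
    μ * ‖xp - x‖ ≤ ‖gradient f x‖ := by
  have hqg := mul_sq_infDist_le_of_pl hμ hdiff (fun z ↦ hfstar.2 ⟨z, rfl⟩) hPL x
  rw [← hXstar, ← hproj] at hqg
  have hsq : (μ * ‖xp - x‖) ^ 2 ≤ ‖gradient f x‖ ^ 2 := by nlinarith [hPL x]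
  exact (pow_le_pow_iff_left₀ (by positivity) (norm_nonneg _) two_ne_zero).1 hsq

/-- A differentiable function with `L`-Lipschitz gradient satisfying the PL
condition with constant `μ` satisfies the Error Bound condition with constant `μ`:
`‖∇f(x)‖ ≥ μ‖x_p − x‖` where `x_p` is the projection of `x` onto the set of global
minimizers. -/
theorem pl_implies_error_bound (n : ℕ) (f : EuclideanSpace ℝ (Fin n) → ℝ)
    (L μ : ℝ) (hμ : 0 < μ)
    (hdiff : Differentiable ℝ f)
    (hLip : ∀ x₁ x₂, ‖gradient f x₁ - gradient f x₂‖ ≤ L * ‖x₁ - x₂‖)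
    (fstar : ℝ) (hfstar : IsLeast (Set.range f) fstar)
    (hPL : ∀ x, μ * (f x - fstar) ≤ (1 / 2) * ‖gradient f x‖ ^ 2)
    (Xstar : Set (EuclideanSpace ℝ (Fin n))) (hXstar : Xstar = {z | f z = fstar})
    (hXne : Xstar.Nonempty)
    (x xp : EuclideanSpace ℝ (Fin n)) (hxp : xp ∈ Xstar)
    (hproj : ‖xp - x‖ = Metric.infDist x Xstar) :
    μ * ‖xp - x‖ ≤ ‖gradient f x‖ :=
  pl_implies_error_bound_general n f μ hμ hdiff fstar hfstar hPL Xstar hXstar x xp hproj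
end

section
/- Let f : ℝ^n → ℝ be differentiable with L-Lipschitz gradient and satisfy the Polyak–Łojasiewicz condition with constant μ > 0, and assume the set X* of global minimizers of f is nonempty. Then f satisfies the Quadratic Growth condition with constant μ: for every x, f(x) − f* ≥ (μ/2)·‖x_p − x‖², where f* = min f and x_p is the projection of x onto X* (i.e., ‖x_p − x‖ = dist(x, X*)). -/
/-!
Put `g = √(f - f*)`. At any `y` with `f y > f*` the PL inequality says exactly that
`‖g'(y)‖ ≥ √(μ/2)`. If `g x < c · dist(x, X*)` for some `c < √(μ/2)`, minimize
`z ↦ g z + c‖z - x‖` over the closed ball of radius `dist(x, X*)` around `x`: the minimizer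
lies in the open ball, hence off `X*`, and is a local minimizer of `z ↦ g z + c‖z - y‖`, which
forces `‖g'(y)‖ ≤ c`. Hence `g x ≥ √(μ/2) · dist(x, X*)`, which squares to quadratic growth.
-/

open Metric Set

section

variable {E : Type*} [NormedAddCommGroup E] [NormedSpace ℝ E]

theorem HasFDerivAt.neg_mul_norm_le_of_isLocalMin_add_norm_sub {g : E → ℝ} {g' : E →L[ℝ] ℝ}
    {y : E} {c : ℝ} (hg : HasFDerivAt g g' y)
    (hmin : IsLocalMin (fun z => g z + c * ‖z - y‖) y) (v : E) : -(c * ‖v‖) ≤ g' v := by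
  -- for `t ≥ 0` this is the penalized function along the ray `y + t • v`, now differentiable
  set k : ℝ → ℝ := fun t => g (y + t • v) + c * ‖v‖ * t
  have hk : HasDerivAt k (g' v + c * ‖v‖) 0 := by
    have hline : HasDerivAt (fun t : ℝ => y + t • v) v 0 := by
      simpa using ((hasDerivAt_id (0 : ℝ)).smul_const v).const_add y
    have := (hg.comp_hasDerivAt_of_eq 0 hline (by simp)).add
      ((hasDerivAt_id (0 : ℝ)).const_mul (c * ‖v‖))
    rwa [mul_one] at this
  have hkmin : IsLocalMinOn k (Ici 0) 0 := by
    have hmin0 : IsLocalMin (fun z => g z + c * ‖z - y‖) (y + (0 : ℝ) • v) := by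
      simpa using hmin
    have hcomp := (hmin0.comp_continuous (g := fun t : ℝ => y + t • v) (b := 0)
      (by fun_prop)).on (Ici 0)
    refine hcomp.congr ?_ self_mem_Ici
    filter_upwards [self_mem_nhdsWithin] with t (ht : 0 ≤ t)
    simp [k, norm_smul, abs_of_nonneg ht, mul_comm, mul_left_comm]
  have hone : (1 : ℝ) ∈ posTangentConeAt (Ici 0) (0 : ℝ) :=
    mem_posTangentConeAt_of_segment_subset (by simp [segment_eq_Icc, Icc_subset_Ici_self])
  have hk_nonneg : 0 ≤ g' v + c * ‖v‖ := by
    simpa using hkmin.hasFDerivWithinAt_nonneg hk.hasFDerivAt.hasFDerivWithinAt hone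
  linarith

theorem HasFDerivAt.norm_le_of_isLocalMin_add_norm_sub {g : E → ℝ} {g' : E →L[ℝ] ℝ}
    {y : E} {c : ℝ} (hg : HasFDerivAt g g' y) (hc : 0 ≤ c)
    (hmin : IsLocalMin (fun z => g z + c * ‖z - y‖) y) : ‖g'‖ ≤ c := by
  refine g'.opNorm_le_bound hc fun v => abs_le.2 ⟨?_, ?_⟩
  · exact hg.neg_mul_norm_le_of_isLocalMin_add_norm_sub hmin v
  · have := hg.neg_mul_norm_le_of_isLocalMin_add_norm_sub hmin (-v)
    rw [map_neg, norm_neg] at this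
    linarith

theorem mul_infDist_le_of_le_norm_fderiv [ProperSpace E] {g : E → ℝ} {m : ℝ}
    (hcont : Continuous g) (hnonneg : ∀ z, 0 ≤ g z)
    (hdiff : ∀ y, 0 < g y → DifferentiableAt ℝ g y)
    (hslope : ∀ y, 0 < g y → m ≤ ‖fderiv ℝ g y‖) (x : E) :
    m * infDist x {z | g z = 0} ≤ g x := by
  set d := infDist x {z | g z = 0}
  by_contra! hlt
  have hd : 0 < d := by
    by_contra! h
    rw [le_antisymm h infDist_nonneg, mul_zero] at hlt
    linarith [hnonneg x]
  obtain ⟨c, hxc, hcm⟩ := exists_between ((div_lt_iff₀ hd).2 hlt)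
  have hc : 0 ≤ c := (div_nonneg (hnonneg x) hd.le).trans hxc.le
  have hcd : g x < c * d := (div_lt_iff₀ hd).1 hxc
  obtain ⟨y, -, hymin⟩ := (isCompact_closedBall x d).exists_isMinOn
    (f := fun z => g z + c * ‖z - x‖) ⟨x, mem_closedBall_self hd.le⟩ (by fun_prop)
  have hyx : ‖y - x‖ < d := by
    have := hymin (mem_closedBall_self hd.le)
    simp only [mem_ofPred_eq, sub_self, norm_zero, mul_zero, add_zero] at this
    nlinarith [hnonneg y]
  have hy : 0 < g y := by
    refine (hnonneg y).lt_of_ne fun h => ?_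
    have := infDist_le_dist_of_mem (x := x) (show y ∈ {z | g z = 0} from h.symm)
    rw [dist_comm, dist_eq_norm] at this
    linarith
  have hloc : IsLocalMin (fun z => g z + c * ‖z - y‖) y := by
    filter_upwards [isOpen_ball.mem_nhds (mem_ball_iff_norm.2 hyx)] with z hz
    have hmin := hymin (ball_subset_closedBall hz)
    have htri : ‖z - x‖ ≤ ‖z - y‖ + ‖y - x‖ := norm_sub_le_norm_sub_add_norm_sub z y x
    simp only [mem_ofPred_eq, sub_self, norm_zero, mul_zero, add_zero] at hmin ⊢
    nlinarith
  linarith [(hdiff y hy).hasFDerivAt.norm_le_of_isLocalMin_add_norm_sub hc hloc, hslope y hy]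

theorem sqrt_le_norm_fderiv_sqrt_sub_of_pl {f : E → ℝ} {fstar μ : ℝ} {y : E} (hμ : 0 ≤ μ)
    (hf : DifferentiableAt ℝ f y) (hy : fstar < f y)
    (hPL : μ * (f y - fstar) ≤ 1 / 2 * ‖fderiv ℝ f y‖ ^ 2) :
    √(μ / 2) ≤ ‖fderiv ℝ (fun z => √(f z - fstar)) y‖ := by
  have ha : 0 < f y - fstar := sub_pos.2 hy
  rw [fderiv_sqrt (hf.sub_const fstar) ha.ne', fderiv_sub_const, norm_smul, Real.norm_eq_abs,
    abs_of_pos (by positivity), one_div, inv_mul_eq_div, le_div_iff₀ (by positivity)]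
  refine (pow_le_pow_iff_left₀ (by positivity) (norm_nonneg _) two_ne_zero).1 ?_
  rw [mul_pow, mul_pow, Real.sq_sqrt (by positivity), Real.sq_sqrt ha.le]
  linarith

theorem quadratic_growth_of_pl [ProperSpace E] {f : E → ℝ} {fstar μ : ℝ} (hμ : 0 ≤ μ)
    (hf : Differentiable ℝ f) (hmin : ∀ z, fstar ≤ f z)
    (hPL : ∀ y, μ * (f y - fstar) ≤ 1 / 2 * ‖fderiv ℝ f y‖ ^ 2) (x : E) :
    μ / 2 * infDist x {z | f z = fstar} ^ 2 ≤ f x - fstar := by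
  have hzero : {z | f z = fstar} = {z | √(f z - fstar) = 0} := by
    ext z
    simp only [mem_ofPred_eq, Real.sqrt_eq_zero', sub_nonpos]
    exact ⟨fun h => h.le, fun h => h.antisymm (hmin z)⟩
  have hbound := mul_infDist_le_of_le_norm_fderiv (g := fun z => √(f z - fstar))
    (Real.continuous_sqrt.comp (hf.continuous.sub continuous_const)) (fun z => Real.sqrt_nonneg _)
    (fun y hy => ((hf y).sub_const fstar).sqrt (Real.sqrt_pos.1 hy).ne')
    (fun y hy => sqrt_le_norm_fderiv_sqrt_sub_of_pl hμ (hf y)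
      (sub_pos.1 (Real.sqrt_pos.1 hy)) (hPL y)) x
  rw [← hzero] at hbound
  have hsq := pow_le_pow_left₀ (mul_nonneg (Real.sqrt_nonneg _) infDist_nonneg) hbound 2
  rwa [mul_pow, Real.sq_sqrt (by positivity), Real.sq_sqrt (sub_nonneg.2 (hmin x))] at hsq

end

theorem pl_implies_quadratic_growth_general (n : ℕ) (f : EuclideanSpace ℝ (Fin n) → ℝ)
    (μ : ℝ) (hμ : 0 < μ)
    (hdiff : Differentiable ℝ f)
    (fstar : ℝ) (hfstar : IsLeast (Set.range f) fstar)
    (hPL : ∀ x, μ * (f x - fstar) ≤ (1 / 2) * ‖gradient f x‖ ^ 2)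
    (Xstar : Set (EuclideanSpace ℝ (Fin n))) (hXstar : Xstar = {z | f z = fstar})
    (x xp : EuclideanSpace ℝ (Fin n))
    (hproj : ‖xp - x‖ = Metric.infDist x Xstar) :
    (μ / 2) * ‖xp - x‖ ^ 2 ≤ f x - fstar := by
  have hPL' : ∀ y, μ * (f y - fstar) ≤ 1 / 2 * ‖fderiv ℝ f y‖ ^ 2 := fun y => by
    simpa [gradient] using hPL y
  rw [hproj, hXstar]
  exact quadratic_growth_of_pl hμ.le hdiff (fun z => hfstar.2 ⟨z, rfl⟩) hPL' x

/-- A differentiable function with `L`-Lipschitz gradient satisfying the PL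
condition with constant `μ` satisfies the Quadratic Growth condition with constant `μ`:
`f(x) − f* ≥ (μ/2)‖x_p − x‖²` where `x_p` is the projection of `x` onto the set of global
minimizers. -/
theorem pl_implies_quadratic_growth (n : ℕ) (f : EuclideanSpace ℝ (Fin n) → ℝ)
    (L μ : ℝ) (hμ : 0 < μ)
    (hdiff : Differentiable ℝ f)
    (hLip : ∀ x₁ x₂, ‖gradient f x₁ - gradient f x₂‖ ≤ L * ‖x₁ - x₂‖)
    (fstar : ℝ) (hfstar : IsLeast (Set.range f) fstar)
    (hPL : ∀ x, μ * (f x - fstar) ≤ (1 / 2) * ‖gradient f x‖ ^ 2)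
    (Xstar : Set (EuclideanSpace ℝ (Fin n))) (hXstar : Xstar = {z | f z = fstar})
    (hXne : Xstar.Nonempty)
    (x xp : EuclideanSpace ℝ (Fin n)) (hxp : xp ∈ Xstar)
    (hproj : ‖xp - x‖ = Metric.infDist x Xstar) :
    (μ / 2) * ‖xp - x‖ ^ 2 ≤ f x - fstar :=
  pl_implies_quadratic_growth_general n f μ hμ hdiff fstar hfstar hPL Xstar hXstar x xp hproj
end

section
/- Let F : ℝ^n × ℝ^m → ℝ satisfy Assumption 1 (L-smoothness) and Assumption 3 (two-sided PL condition with constants μ₁, μ₂ > 0), with argmax_y F(x,y) nonempty with finite optimal value for every x and min_x h(x) attained. Then the function h(x) = max_y F(x,y) satisfies the PL condition with constant μ₁: (1/2)‖∇h(x)‖² ≥ μ₁(h(x) − h*) for all x, where h* = min_x h(x). -/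
/-!
At a maximiser `y` of `F x ·` the `y`-gradient vanishes, so by Lipschitz continuity of
`∇_y F` in `x` we get `‖∇_y F(x', y)‖ ≤ L ‖x' - x‖`, and the PL inequality in `y` turns this
into `0 ≤ h x' - F(x', y) ≤ L² ‖x' - x‖² / (2 μ₂)`. Hence `h` and `F(·, y)` agree at `x` to
second order and `∇h(x) = ∇ₓF(x, y)`. The PL inequality in `x` at `(x, y)` then gives the claim,
because `min_x F(x, y) ≤ F(x*, y) ≤ h(x*) = h*`.
-/

open Filter Topology Asymptotics

section

variable {E G : Type*} [NormedAddCommGroup E]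
  [NormedAddCommGroup G] [InnerProductSpace ℝ G] [CompleteSpace G]

theorem IsLocalMax.gradient_eq_zero {f : G → ℝ} {y : G} (hy : IsLocalMax f y) :
    gradient f y = 0 := by
  rw [gradient, hy.fderiv_eq_zero, map_zero]

variable {F : E → G → ℝ} {h : E → ℝ} {L μ : ℝ}

theorem sub_le_sq_norm_of_isPL {x : E} {y : G} (hμ : 0 < μ)
    (hPL : ∀ x y, μ * (h x - F x y) ≤ 1 / 2 * ‖gradient (F x) y‖ ^ 2)
    (hlip : ∀ x₁ x₂ y, ‖gradient (F x₁) y - gradient (F x₂) y‖ ≤ L * ‖x₁ - x₂‖)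
    (hy : ∀ y', F x y' ≤ F x y) (x' : E) :
    h x' - F x' y ≤ L ^ 2 / (2 * μ) * ‖x' - x‖ ^ 2 := by
  have hgrad_le : ‖gradient (F x') y‖ ≤ L * ‖x' - x‖ := by
    simpa [(IsLocalMax.gradient_eq_zero (Eventually.of_forall hy))] using hlip x' x y
  have hsq : ‖gradient (F x') y‖ ^ 2 ≤ (L * ‖x' - x‖) ^ 2 :=
    pow_le_pow_left₀ (norm_nonneg _) hgrad_le 2
  rw [div_mul_eq_mul_div, le_div_iff₀ (by positivity)]
  nlinarith [hPL x' y]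

variable [InnerProductSpace ℝ E] [CompleteSpace E]

theorem HasGradientAt.of_isBigO_sub_sq {f k : E → ℝ} {g x : E} (hf : HasGradientAt f g x)
    (hO : (fun x' => k x' - f x') =O[𝓝 x] fun x' => ‖x' - x‖ ^ 2) :
    HasGradientAt k g x := by
  rw [hasGradientAt_iff_hasFDerivAt]
  simpa using (hf.hasFDerivAt.add (hO.hasFDerivAt one_lt_two)).congr_of_eventuallyEq
    (Eventually.of_forall fun x' => by simp)

/-- A Danskin-type theorem: the PL inequality in `y` replaces the usual compactness and
uniqueness assumptions on the maximiser. -/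
theorem hasGradientAt_of_isPL {x : E} {y : G} (hμ : 0 < μ)
    (hPL : ∀ x y, μ * (h x - F x y) ≤ 1 / 2 * ‖gradient (F x) y‖ ^ 2)
    (hlip : ∀ x₁ x₂ y, ‖gradient (F x₁) y - gradient (F x₂) y‖ ≤ L * ‖x₁ - x₂‖)
    (hle : ∀ x y, F x y ≤ h x) (hy : F x y = h x)
    (hdiff : DifferentiableAt ℝ (fun x' => F x' y) x) :
    HasGradientAt h (gradient (fun x' => F x' y) x) x := by
  refine hdiff.hasGradientAt.of_isBigO_sub_sq (IsBigO.of_bound (L ^ 2 / (2 * μ)) ?_)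
  refine Eventually.of_forall fun x' => ?_
  rw [Real.norm_of_nonneg (sub_nonneg.2 (hle x' y)), norm_pow, norm_norm]
  exact sub_le_sq_norm_of_isPL hμ hPL hlip (fun y' => hy ▸ hle x y') x'

end

theorem h_is_PL_general (n m : ℕ)
    (F : EuclideanSpace ℝ (Fin n) → EuclideanSpace ℝ (Fin m) → ℝ)
    (L μ₁ μ₂ : ℝ) (hμ₁ : 0 < μ₁) (hμ₂ : 0 < μ₂)
    (hdiff : Differentiable ℝ fun p : EuclideanSpace ℝ (Fin n) × EuclideanSpace ℝ (Fin m) =>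
      F p.1 p.2)
    (hsmoothy : ∀ x₁ x₂ y₁ y₂,
      ‖gradient (F x₁) y₁ - gradient (F x₂) y₂‖ ≤ L * (‖x₁ - x₂‖ + ‖y₁ - y₂‖))
    (Fmin : EuclideanSpace ℝ (Fin m) → ℝ)
    (hFmin : ∀ y, IsGLB (Set.range fun x => F x y) (Fmin y))
    (h : EuclideanSpace ℝ (Fin n) → ℝ)
    (hmax : ∀ x, IsGreatest (Set.range (F x)) (h x))
    (hstar : ℝ) (hhstar : IsLeast (Set.range h) hstar)
    (hPLx : ∀ x y, μ₁ * (F x y - Fmin y) ≤ (1 / 2) * ‖gradient (fun x' => F x' y) x‖ ^ 2)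
    (hPLy : ∀ x y, μ₂ * (h x - F x y) ≤ (1 / 2) * ‖gradient (F x) y‖ ^ 2)
    (x : EuclideanSpace ℝ (Fin n)) :
    μ₁ * (h x - hstar) ≤ (1 / 2) * ‖gradient h x‖ ^ 2 := by
  obtain ⟨y, hy⟩ := (hmax x).1
  have hle : ∀ x y, F x y ≤ h x := fun x y => (hmax x).2 ⟨y, rfl⟩
  have hlip : ∀ x₁ x₂ y, ‖gradient (F x₁) y - gradient (F x₂) y‖ ≤ L * ‖x₁ - x₂‖ :=
    fun x₁ x₂ y => by simpa using hsmoothy x₁ x₂ y y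
  have hdiffx : DifferentiableAt ℝ (fun x' => F x' y) x :=
    (hdiff.comp (differentiable_id.prodMk (differentiable_const y))) x
  have hgrad := (hasGradientAt_of_isPL hμ₂ hPLy hlip hle hy hdiffx).gradient
  obtain ⟨xstar, hxstar⟩ := hhstar.1
  have hFmin_le : Fmin y ≤ hstar :=
    ((hFmin y).1 ⟨xstar, rfl⟩).trans (hxstar ▸ hle xstar y)
  calc μ₁ * (h x - hstar) ≤ μ₁ * (F x y - Fmin y) := by
        rw [hy]; exact mul_le_mul_of_nonneg_left (by linarith) hμ₁.le
    _ ≤ 1 / 2 * ‖gradient h x‖ ^ 2 := hgrad ▸ hPLx x y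

/-- Under `L`-smoothness (Assumption 1) and the two-sided PL condition
(Assumption 3), with the max over `y` attained (value `h(x)`) and `min_x h(x)` attained
(value `h*`), the function `h(x) = max_y F(x,y)` satisfies the PL condition with `μ₁`:
`(1/2)‖∇h(x)‖² ≥ μ₁(h(x) − h*)`. -/
theorem h_is_PL (n m : ℕ)
    (F : EuclideanSpace ℝ (Fin n) → EuclideanSpace ℝ (Fin m) → ℝ)
    (L μ₁ μ₂ : ℝ) (hμ₁ : 0 < μ₁) (hμ₂ : 0 < μ₂)
    (hdiff : Differentiable ℝ fun p : EuclideanSpace ℝ (Fin n) × EuclideanSpace ℝ (Fin m) =>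
      F p.1 p.2)
    (hsmoothx : ∀ x₁ x₂ y₁ y₂,
      ‖gradient (fun x => F x y₁) x₁ - gradient (fun x => F x y₂) x₂‖
        ≤ L * (‖x₁ - x₂‖ + ‖y₁ - y₂‖))
    (hsmoothy : ∀ x₁ x₂ y₁ y₂,
      ‖gradient (F x₁) y₁ - gradient (F x₂) y₂‖ ≤ L * (‖x₁ - x₂‖ + ‖y₁ - y₂‖))
    (Fmin : EuclideanSpace ℝ (Fin m) → ℝ)
    (hFmin : ∀ y, IsGLB (Set.range fun x => F x y) (Fmin y))
    (h : EuclideanSpace ℝ (Fin n) → ℝ)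
    (hmax : ∀ x, IsGreatest (Set.range (F x)) (h x))
    (hstar : ℝ) (hhstar : IsLeast (Set.range h) hstar)
    (hPLx : ∀ x y, μ₁ * (F x y - Fmin y) ≤ (1 / 2) * ‖gradient (fun x' => F x' y) x‖ ^ 2)
    (hPLy : ∀ x y, μ₂ * (h x - F x y) ≤ (1 / 2) * ‖gradient (F x) y‖ ^ 2)
    (x : EuclideanSpace ℝ (Fin n)) :
    μ₁ * (h x - hstar) ≤ (1 / 2) * ‖gradient h x‖ ^ 2 :=
  h_is_PL_general n m F L μ₁ μ₂ hμ₁ hμ₂ hdiff hsmoothy Fmin hFmin h hmax hstar hhstar hPLx hPLy x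
end

section
/- Let F : ℝ^n × ℝ^m → ℝ be differentiable and L-smooth (Assumption 1), and suppose for every x the function y ↦ −F(x,y) satisfies the PL condition with constant μ₂ > 0 and argmax_y F(x,y) is nonempty with finite optimal value. Let h(x) = max_y F(x,y). Then for all x, y, ‖∇ₓF(x,y) − ∇h(x)‖² ≤ (2L²/μ₂)·(h(x) − F(x,y)). -/
/-!
Gradient ascent on `y ↦ F x y` with a small step `η` lowers `√(h x - F x ·)` at each step by
at least `(1 - O(η)) √(μ₂ / 2)` times the step length, by PL. So the iterates from `y` converge
to a maximizer `y'` at distance at most `√(2 (h x - F x y) / μ₂)` once `η → 0` (quadratic growth),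
and `‖∇ₓF(x, y) - ∇ₓF(x, y')‖ ≤ L ‖y - y'‖` gives the bound, provided `∇h(x) = ∇ₓF(x, y')`.

This Danskin-type formula holds because `∇ₓF(x, ·)` takes one value on all maximizers: if
`d = ∇ₓF(x, m) - ∇ₓF(x, m') ≠ 0`, moving `x` to `x + t d` opens a gap of order `t ‖d‖²`
between `F(·, m)` and `F(·, m')`, while PL and `∇_yF(x, m') = 0` bound it by `O(t²)`.
Then `h` is squeezed between `F(·, m)` and `F(·, m')` for a maximizer `m'` at the moved point,
which by quadratic growth lies near a maximizer at `x`.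
-/

open Set Filter Topology InnerProductSpace
open scoped NNReal

theorem sub_le_two_mul_sqrt_mul_sub_sqrt {p q : ℝ} (hq : 0 ≤ q) (hqp : q ≤ p) :
    p - q ≤ 2 * √p * (√p - √q) := by
  nlinarith [sq_nonneg (√p - √q), Real.sq_sqrt hq, Real.sq_sqrt (hq.trans hqp)]

theorem exists_tendsto_dist_le_of_dist_le_sub {X : Type*} [MetricSpace X] [CompleteSpace X]
    {u : ℕ → X} {s : ℕ → ℝ} (hs : ∀ k, 0 ≤ s k)
    (hu : ∀ k, dist (u k) (u (k + 1)) ≤ s k - s (k + 1)) :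
    ∃ x, Tendsto u atTop (𝓝 x) ∧ dist (u 0) x ≤ s 0 := by
  have hsum : ∀ n, ∑ k ∈ Finset.range n, dist (u k) (u (k + 1)) ≤ s 0 := fun n =>
    calc ∑ k ∈ Finset.range n, dist (u k) (u (k + 1))
        ≤ ∑ k ∈ Finset.range n, (s k - s (k + 1)) := Finset.sum_le_sum fun k _ => hu k
      _ = s 0 - s n := Finset.sum_range_sub' s n
      _ ≤ s 0 := sub_le_self _ (hs n)
  have hsummable := summable_of_sum_range_le (fun _ => dist_nonneg) hsum
  obtain ⟨x, hx⟩ := cauchySeq_tendsto_of_complete (cauchySeq_of_summable_dist hsummable)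
  refine ⟨x, hx, ?_⟩
  calc dist (u 0) x ≤ ∑' k, dist (u k) (u (k + 1)) :=
        dist_le_tsum_of_dist_le_of_tendsto₀ _ (fun _ => le_rfl) hsummable hx
    _ ≤ s 0 := Real.tsum_le_of_sum_range_le (fun _ => dist_nonneg) hsum

section

variable {E : Type*} [NormedAddCommGroup E] [InnerProductSpace ℝ E] [CompleteSpace E]
  {f : E → ℝ} {K : ℝ≥0}

theorem abs_sub_sub_inner_le_of_lipschitzWith_gradient (hf : Differentiable ℝ f)
    (hK : LipschitzWith K (gradient f)) (a b : E) :
    |f b - f a - ⟪gradient f a, b - a⟫_ℝ| ≤ K / 2 * ‖b - a‖ ^ 2 := by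
  set v := b - a
  have hderiv : ∀ s : ℝ, HasDerivAt (fun s => f (a + s • v) - f a - s * ⟪gradient f a, v⟫_ℝ)
      ⟪gradient f (a + s • v) - gradient f a, v⟫_ℝ s := by
    intro s
    have hline : HasDerivAt (fun s : ℝ => a + s • v) v s := by
      simpa using ((hasDerivAt_id s).smul_const v).const_add a
    have hcomp := (hf _).hasGradientAt.hasFDerivAt.comp_hasDerivAt s hline
    rw [inner_sub_left]
    exact (hcomp.sub_const (f a)).fun_sub (hasDerivAt_mul_const ⟪gradient f a, v⟫_ℝ)
  have hbound : ∀ s ∈ Ico (0 : ℝ) 1,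
      ‖⟪gradient f (a + s • v) - gradient f a, v⟫_ℝ‖ ≤ K * s * ‖v‖ ^ 2 := by
    rintro s ⟨hs, -⟩
    calc ‖⟪gradient f (a + s • v) - gradient f a, v⟫_ℝ‖
        ≤ ‖gradient f (a + s • v) - gradient f a‖ * ‖v‖ := norm_inner_le_norm _ _
      _ ≤ K * ‖a + s • v - a‖ * ‖v‖ := by gcongr; exact hK.norm_sub_le _ _
      _ = K * s * ‖v‖ ^ 2 := by
        rw [add_sub_cancel_left, norm_smul, Real.norm_of_nonneg hs]
        ring
  have hB : ∀ s : ℝ, HasDerivAt (fun s : ℝ => K / 2 * s ^ 2 * ‖v‖ ^ 2) (K * s * ‖v‖ ^ 2) s := by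
    intro s
    exact (((hasDerivAt_pow 2 s).const_mul (K / 2 : ℝ)).mul_const (‖v‖ ^ 2)).congr_deriv
      (by push_cast; ring)
  have := image_norm_le_of_norm_deriv_right_le_deriv_boundary
    (fun s _ => (hderiv s).continuousAt.continuousWithinAt)
    (fun s _ => (hderiv s).hasDerivWithinAt) (by simp) hB hbound (right_mem_Icc.2 zero_le_one)
  simpa [v] using this

theorem hasGradientAt_of_abs_sub_sub_inner_le {x g : E} {C : ℝ}
    (hC : ∀ v, |f (x + v) - f x - ⟪g, v⟫_ℝ| ≤ C * ‖v‖ ^ 2) : HasGradientAt f g x := by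
  rw [hasGradientAt_iff_isLittleO_nhds_zero]
  refine (Asymptotics.IsBigO.of_bound C (Eventually.of_forall fun v => ?_)).trans_isLittleO
    (Asymptotics.isLittleO_norm_pow_id one_lt_two)
  simpa using hC v

noncomputable def gradientAscentStep (f : E → ℝ) (η : ℝ) (w : E) : E := w + η • gradient f w

theorem le_apply_gradientAscentStep (hf : Differentiable ℝ f)
    (hK : LipschitzWith K (gradient f)) (η : ℝ) (w : E) :
    f w + η * (1 - K * η / 2) * ‖gradient f w‖ ^ 2 ≤ f (gradientAscentStep f η w) := by
  have := abs_le.1 (abs_sub_sub_inner_le_of_lipschitzWith_gradient hf hK w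
    (gradientAscentStep f η w))
  simp only [gradientAscentStep, add_sub_cancel_left, inner_smul_right, real_inner_self_eq_norm_sq,
    norm_smul, mul_pow, Real.norm_eq_abs, sq_abs] at this ⊢
  linarith [this.1]

theorem mul_dist_gradientAscentStep_le {M μ η a : ℝ} (hf : Differentiable ℝ f)
    (hK : LipschitzWith K (gradient f)) (hM : ∀ z, f z ≤ M)
    (hPL : ∀ z, μ * (M - f z) ≤ 1 / 2 * ‖gradient f z‖ ^ 2) (hμ : 0 < μ) (hη : 0 < η)
    (ha : 0 ≤ a) (haη : a ≤ 1 - K * η / 2) (w : E) :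
    a * √(2 * μ) * dist w (gradientAscentStep f η w)
      ≤ 2 * (√(M - f w) - √(M - f (gradientAscentStep f η w))) := by
  have hPLw := hPL w
  set G := ‖gradient f w‖
  set p := M - f w
  set q := M - f (gradientAscentStep f η w)
  have hdist : dist w (gradientAscentStep f η w) = η * G := by
    rw [dist_comm, dist_eq_norm, gradientAscentStep, add_sub_cancel_left, norm_smul,
      Real.norm_of_nonneg hη.le]
  have hq : 0 ≤ q := sub_nonneg.2 (hM _)
  have hdecrease : q + η * a * G ^ 2 ≤ p := by
    have := le_apply_gradientAscentStep hf hK η w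
    have : η * a * G ^ 2 ≤ η * (1 - K * η / 2) * G ^ 2 := by gcongr
    linarith
  have hqp : q ≤ p := by nlinarith [mul_nonneg (mul_nonneg hη.le ha) (sq_nonneg G)]
  have hPL' : √(2 * μ) * √p ≤ G := by
    rw [← Real.sqrt_mul (by positivity), ← Real.sqrt_sq (show 0 ≤ G from norm_nonneg _)]
    exact Real.sqrt_le_sqrt (by linarith)
  have hsqrt : √q ≤ √p := Real.sqrt_le_sqrt hqp
  have key : G * (a * √(2 * μ) * (η * G)) ≤ G * (2 * (√p - √q)) := by
    calc G * (a * √(2 * μ) * (η * G)) = √(2 * μ) * (η * a * G ^ 2) := by ring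
      _ ≤ √(2 * μ) * (2 * √p * (√p - √q)) := by
        have := sub_le_two_mul_sqrt_mul_sub_sqrt hq hqp
        exact mul_le_mul_of_nonneg_left (by linarith) (Real.sqrt_nonneg _)
      _ = 2 * (√(2 * μ) * √p) * (√p - √q) := by ring
      _ ≤ 2 * G * (√p - √q) := by gcongr
      _ = G * (2 * (√p - √q)) := by ring
  rw [hdist]
  rcases (show 0 ≤ G from norm_nonneg _).eq_or_lt with hG | hG
  · simp [← hG, hsqrt]
  · exact le_of_mul_le_mul_left key hG

theorem exists_eq_and_mul_dist_le_of_pl {M μ a : ℝ} (hf : Differentiable ℝ f)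
    (hK : LipschitzWith K (gradient f)) (hM : ∀ z, f z ≤ M)
    (hPL : ∀ z, μ * (M - f z) ≤ 1 / 2 * ‖gradient f z‖ ^ 2) (hμ : 0 < μ)
    (ha₀ : 0 < a) (ha₁ : a < 1) (z : E) :
    ∃ z', f z' = M ∧ a * √(2 * μ) * dist z z' ≤ 2 * √(M - f z) := by
  set η : ℝ := 2 * (1 - a) / (K + 1)
  have hη : 0 < η := by positivity
  have haη : a ≤ 1 - K * η / 2 := by
    have : K * η / 2 ≤ 1 - a := by
      rw [show K * η / 2 = (1 - a) * (K / (K + 1)) by ring]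
      exact mul_le_of_le_one_right (by linarith) ((div_le_one (by positivity)).2 (by linarith))
    linarith
  set c := a * √(2 * μ)
  have hc : 0 < c := by positivity
  set u : ℕ → E := fun k => (gradientAscentStep f η)^[k] z
  have hu_succ : ∀ k, u (k + 1) = gradientAscentStep f η (u k) := fun k =>
    Function.iterate_succ_apply' _ _ _
  obtain ⟨z', hlim, hdist⟩ := exists_tendsto_dist_le_of_dist_le_sub
    (u := u) (s := fun k => 2 * √(M - f (u k)) / c) (fun k => by positivity) fun k => by
      rw [← sub_div, ← mul_sub, le_div_iff₀ hc, mul_comm, hu_succ]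
      exact mul_dist_gradientAscentStep_le hf hK hM hPL hμ hη ha₀.le haη (u k)
  have hgrad : gradient f z' = 0 := by
    have hsteps : Tendsto (fun k => u (k + 1) - u k) atTop (𝓝 (z' - z')) :=
      (hlim.comp (tendsto_add_atTop_nat 1)).sub hlim
    have hsteps' : Tendsto (fun k => u (k + 1) - u k) atTop (𝓝 (η • gradient f z')) := by
      simp only [hu_succ, gradientAscentStep, add_sub_cancel_left]
      exact (hK.continuous.tendsto z' |>.comp hlim).const_smul η
    have := tendsto_nhds_unique hsteps' hsteps
    rwa [sub_self, smul_eq_zero, or_iff_right hη.ne'] at this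
  refine ⟨z', le_antisymm (hM z') ?_, ?_⟩
  · have := hPL z'
    rw [hgrad, norm_zero] at this
    nlinarith
  · rwa [le_div_iff₀ hc, mul_comm] at hdist

end

theorem exists_eq_and_mul_dist_sq_le_of_pl {E : Type*} [NormedAddCommGroup E]
    [InnerProductSpace ℝ E] [ProperSpace E] {f : E → ℝ} {K : ℝ≥0} {M μ : ℝ}
    (hf : Differentiable ℝ f)
    (hK : LipschitzWith K (gradient f)) (hM : ∀ z, f z ≤ M)
    (hPL : ∀ z, μ * (M - f z) ≤ 1 / 2 * ‖gradient f z‖ ^ 2) (hμ : 0 < μ) (z : E) :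
    ∃ z', f z' = M ∧ μ / 2 * dist z z' ^ 2 ≤ M - f z := by
  have hclosed : IsClosed {w | f w = M} := isClosed_eq hf.continuous continuous_const
  obtain ⟨w, hw, -⟩ := exists_eq_and_mul_dist_le_of_pl hf hK hM hPL hμ one_half_pos one_half_lt_one z
  obtain ⟨z', hz', hinf⟩ := hclosed.exists_infDist_eq_dist ⟨w, hw⟩ z
  refine ⟨z', hz', ?_⟩
  have hlim : Tendsto (fun a : ℝ => a * √(2 * μ) * dist z z') (𝓝[<] 1)
      (𝓝 (√(2 * μ) * dist z z')) := by
    have : Tendsto (fun a : ℝ => a * √(2 * μ) * dist z z') (𝓝 1)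
        (𝓝 (1 * √(2 * μ) * dist z z')) := (tendsto_id.mul_const _).mul_const _
    simpa using this.mono_left nhdsWithin_le_nhds
  have hle : √(2 * μ) * dist z z' ≤ 2 * √(M - f z) := by
    refine le_of_tendsto hlim ?_
    filter_upwards [Ioo_mem_nhdsLT one_pos] with a ⟨ha₀, ha₁⟩
    obtain ⟨w, hw, hdist⟩ := exists_eq_and_mul_dist_le_of_pl hf hK hM hPL hμ ha₀ ha₁ z
    rw [← hinf]
    calc a * √(2 * μ) * Metric.infDist z {w | f w = M} ≤ a * √(2 * μ) * dist z w :=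
          mul_le_mul_of_nonneg_left (Metric.infDist_le_dist_of_mem hw) (by positivity)
      _ ≤ 2 * √(M - f z) := hdist
  have hsq := pow_le_pow_left₀ (by positivity) hle 2
  rw [mul_pow, mul_pow, Real.sq_sqrt (by positivity), Real.sq_sqrt (sub_nonneg.2 (hM z))] at hsq
  linarith

section

variable {E E' : Type*} [NormedAddCommGroup E] [InnerProductSpace ℝ E] [CompleteSpace E]
  [NormedAddCommGroup E'] [InnerProductSpace ℝ E'] [CompleteSpace E']

/-- Assumption 1 with constant `K`, through the four partial Lipschitz conditions it implies,
together with `h x = max_y F x y` and the `μ`-PL condition for `y ↦ -F x y`. -/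
structure SmoothPLMinimax (F : E → E' → ℝ) (h : E → ℝ) (K : ℝ≥0) (μ : ℝ) : Prop where
  differentiable_fst : ∀ y, Differentiable ℝ (F · y)
  differentiable_snd : ∀ x, Differentiable ℝ (F x)
  lipschitzWith_gradient_fst : ∀ y, LipschitzWith K (gradient (F · y))
  lipschitzWith_gradient_snd : ∀ x, LipschitzWith K (gradient (F x))
  lipschitzWith_gradient_fst_snd : ∀ x, LipschitzWith K fun y => gradient (F · y) x
  lipschitzWith_gradient_snd_fst : ∀ y, LipschitzWith K fun x => gradient (F x) y
  isGreatest : ∀ x, IsGreatest (range (F x)) (h x)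
  pos : 0 < μ
  pl : ∀ x y, μ * (h x - F x y) ≤ 1 / 2 * ‖gradient (F x) y‖ ^ 2

namespace SmoothPLMinimax

variable {F : E → E' → ℝ} {h : E → ℝ} {K : ℝ≥0} {μ : ℝ}

theorem le (hF : SmoothPLMinimax F h K μ) (x : E) (y : E') : F x y ≤ h x :=
  (hF.isGreatest x).2 ⟨y, rfl⟩

theorem gradient_snd_eq_zero (hF : SmoothPLMinimax F h K μ) {x : E} {m : E'} (hm : F x m = h x) :
    gradient (F x) m = 0 := by
  have hmax : IsLocalMax (F x) m := Eventually.of_forall fun y => hm ▸ hF.le x y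
  simp [gradient, hmax.fderiv_eq_zero]

theorem gradient_fst_eq (hF : SmoothPLMinimax F h K μ) {x : E} {m m' : E'} (hm : F x m = h x)
    (hm' : F x m' = h x) : gradient (F · m) x = gradient (F · m') x := by
  set d := gradient (F · m) x - gradient (F · m') x
  have hgap : ∀ t : ℝ, 0 < t → μ * ‖d‖ ^ 2 ≤ t * ((μ * K + K ^ 2 / 2) * ‖d‖ ^ 2) := by
    intro t ht
    have hstep : ‖x + t • d - x‖ = t * ‖d‖ := by
      rw [add_sub_cancel_left, norm_smul, Real.norm_of_nonneg ht.le]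
    have hinner : ⟪d, d⟫_ℝ = ⟪gradient (F · m) x, d⟫_ℝ - ⟪gradient (F · m') x, d⟫_ℝ :=
      inner_sub_left _ _ _
    have hm_lower := (abs_le.1 (abs_sub_sub_inner_le_of_lipschitzWith_gradient
      (hF.differentiable_fst m) (hF.lipschitzWith_gradient_fst m) x (x + t • d))).1
    have hm'_upper := (abs_le.1 (abs_sub_sub_inner_le_of_lipschitzWith_gradient
      (hF.differentiable_fst m') (hF.lipschitzWith_gradient_fst m') x (x + t • d))).2
    rw [hstep, add_sub_cancel_left, inner_smul_right] at hm_lower hm'_upper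
    rw [real_inner_self_eq_norm_sq] at hinner
    have hgrad : ‖gradient (F (x + t • d)) m'‖ ≤ K * (t * ‖d‖) := by
      have := (hF.lipschitzWith_gradient_snd_fst m').norm_sub_le (x + t • d) x
      rwa [hF.gradient_snd_eq_zero hm', sub_zero, hstep] at this
    have hpl := hF.pl (x + t • d) m'
    have hle := hF.le (x + t • d) m
    have hsq : ‖gradient (F (x + t • d)) m'‖ ^ 2 ≤ (K * (t * ‖d‖)) ^ 2 :=
      pow_le_pow_left₀ (norm_nonneg _) hgrad 2
    have hlin : t * ‖d‖ ^ 2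
        = t * ⟪gradient (F · m) x, d⟫_ℝ - t * ⟪gradient (F · m') x, d⟫_ℝ := by
      rw [hinner]; ring
    have hsep : t * ‖d‖ ^ 2 - K * (t * ‖d‖) ^ 2 ≤ h (x + t • d) - F (x + t • d) m' := by
      linarith
    have := mul_le_mul_of_nonneg_left hsep hF.pos.le
    have : t * (μ * ‖d‖ ^ 2) ≤ t * (t * ((μ * K + K ^ 2 / 2) * ‖d‖ ^ 2)) := by
      nlinarith
    exact le_of_mul_le_mul_left this ht
  have hlim : Tendsto (fun t : ℝ => t * ((μ * K + K ^ 2 / 2) * ‖d‖ ^ 2)) (𝓝[>] 0) (𝓝 0) := by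
    simpa using (tendsto_id.mul_const ((μ * K + K ^ 2 / 2) * ‖d‖ ^ 2)).mono_left
      (nhdsWithin_le_nhds (a := (0 : ℝ)))
  have hd : μ * ‖d‖ ^ 2 ≤ 0 :=
    ge_of_tendsto hlim (eventually_nhdsWithin_of_forall fun t ht => hgap t ht)
  have : ‖d‖ ^ 2 = 0 := le_antisymm (nonpos_of_mul_nonpos_right hd hF.pos) (sq_nonneg _)
  rwa [sq_eq_zero_iff, norm_eq_zero, sub_eq_zero] at this

theorem norm_gradient_fst_sub_sq_le [ProperSpace E'] (hF : SmoothPLMinimax F h K μ) {x : E}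
    {m : E'} (hm : F x m = h x) (y : E') :
    ‖gradient (F · y) x - gradient (F · m) x‖ ^ 2 ≤ 2 * K ^ 2 / μ * (h x - F x y) := by
  obtain ⟨y', hy', hgrowth⟩ := exists_eq_and_mul_dist_sq_le_of_pl (hF.differentiable_snd x)
    (hF.lipschitzWith_gradient_snd x) (hF.le x) (hF.pl x) hF.pos y
  rw [hF.gradient_fst_eq hm hy', ← dist_eq_norm]
  have hlip := (hF.lipschitzWith_gradient_fst_snd x).dist_le_mul y y'
  calc dist (gradient (F · y) x) (gradient (F · y') x) ^ 2
      ≤ (K * dist y y') ^ 2 := pow_le_pow_left₀ dist_nonneg hlip 2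
    _ = 2 * K ^ 2 / μ * (μ / 2 * dist y y' ^ 2) := by field_simp [hF.pos.ne']
    _ ≤ 2 * K ^ 2 / μ * (h x - F x y) := by have := hF.pos; gcongr

theorem sub_le_of_eq_max (hF : SmoothPLMinimax F h K μ) {x x' : E} {y : E'}
    (hy : F x' y = h x') : h x - F x y ≤ K ^ 2 / (2 * μ) * ‖x - x'‖ ^ 2 := by
  have hlip := (hF.lipschitzWith_gradient_snd_fst y).norm_sub_le x x'
  rw [hF.gradient_snd_eq_zero hy, sub_zero] at hlip
  have hsq := pow_le_pow_left₀ (norm_nonneg _) hlip 2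
  rw [div_mul_eq_mul_div, le_div_iff₀ (by linarith [hF.pos])]
  nlinarith [hF.pl x y]

theorem abs_sub_sub_inner_le [ProperSpace E'] (hF : SmoothPLMinimax F h K μ) {x : E} {m : E'}
    (hm : F x m = h x) (v : E) :
    |h (x + v) - h x - ⟪gradient (F · m) x, v⟫_ℝ| ≤ (K / 2 + K ^ 2 / μ) * ‖v‖ ^ 2 := by
  have hμ := hF.pos
  set g := gradient (F · m) x
  have hlower := (abs_le.1 (abs_sub_sub_inner_le_of_lipschitzWith_gradient
    (hF.differentiable_fst m) (hF.lipschitzWith_gradient_fst m) x (x + v))).1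
  obtain ⟨m', hm'⟩ := (hF.isGreatest (x + v)).1
  have hupper := (abs_le.1 (abs_sub_sub_inner_le_of_lipschitzWith_gradient
    (hF.differentiable_fst m') (hF.lipschitzWith_gradient_fst m') x (x + v))).2
  rw [add_sub_cancel_left] at hlower hupper
  -- `m'` is a near-maximizer at `x`, so its partial gradient in `x` is close to `g`.
  have hnear : ‖gradient (F · m') x - g‖ ≤ K ^ 2 / μ * ‖v‖ := by
    have hgap := hF.sub_le_of_eq_max (x := x) hm'
    rw [sub_add_cancel_left, norm_neg] at hgap
    refine (pow_le_pow_iff_left₀ (norm_nonneg _) (by positivity) two_ne_zero).1 ?_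
    calc ‖gradient (F · m') x - g‖ ^ 2 ≤ 2 * K ^ 2 / μ * (h x - F x m') :=
          hF.norm_gradient_fst_sub_sq_le hm m'
      _ ≤ 2 * K ^ 2 / μ * (K ^ 2 / (2 * μ) * ‖v‖ ^ 2) := by gcongr
      _ = (K ^ 2 / μ * ‖v‖) ^ 2 := by field_simp
  have hinner : ⟪gradient (F · m') x, v⟫_ℝ ≤ ⟪g, v⟫_ℝ + K ^ 2 / μ * ‖v‖ ^ 2 := by
    have := real_inner_le_norm (gradient (F · m') x - g) v
    rw [inner_sub_left] at this
    nlinarith [norm_nonneg v]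
  rw [abs_le]
  constructor
  · nlinarith [hF.le (x + v) m, sq_nonneg ‖v‖, div_nonneg (sq_nonneg (K : ℝ)) hμ.le]
  · nlinarith [hF.le x m']

theorem hasGradientAt [ProperSpace E'] (hF : SmoothPLMinimax F h K μ) {x : E} {m : E'}
    (hm : F x m = h x) : HasGradientAt h (gradient (F · m) x) x :=
  hasGradientAt_of_abs_sub_sub_inner_le (hF.abs_sub_sub_inner_le hm)

end SmoothPLMinimax

end

theorem lipschitzWith_nnabs_of_norm_sub_le {X Y : Type*} [SeminormedAddCommGroup X]
    [SeminormedAddCommGroup Y] {g : X → Y} {L : ℝ} (hg : ∀ a b, ‖g a - g b‖ ≤ L * ‖a - b‖) :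
    LipschitzWith (Real.nnabs L) g :=
  LipschitzWith.of_dist_le_mul fun a b => by
    rw [dist_eq_norm, dist_eq_norm, Real.coe_nnabs]
    exact (hg a b).trans (mul_le_mul_of_nonneg_right (le_abs_self L) (norm_nonneg _))

/-- Under `L`-smoothness of `F` and the `μ₂`-PL condition for `y ↦ −F(x,y)`
(with the max over `y` attained, with value `h(x)`), the deviation of the partial gradient
from `∇h` is controlled: `‖∇ₓF(x,y) − ∇h(x)‖² ≤ (2L²/μ₂)(h(x) − F(x,y))`. -/
theorem gradient_deviation_bound (n m : ℕ)
    (F : EuclideanSpace ℝ (Fin n) → EuclideanSpace ℝ (Fin m) → ℝ)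
    (L μ₂ : ℝ) (hμ₂ : 0 < μ₂)
    (hdiff : Differentiable ℝ fun p : EuclideanSpace ℝ (Fin n) × EuclideanSpace ℝ (Fin m) =>
      F p.1 p.2)
    (hsmoothx : ∀ x₁ x₂ y₁ y₂,
      ‖gradient (fun x => F x y₁) x₁ - gradient (fun x => F x y₂) x₂‖
        ≤ L * (‖x₁ - x₂‖ + ‖y₁ - y₂‖))
    (hsmoothy : ∀ x₁ x₂ y₁ y₂,
      ‖gradient (F x₁) y₁ - gradient (F x₂) y₂‖ ≤ L * (‖x₁ - x₂‖ + ‖y₁ - y₂‖))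
    (h : EuclideanSpace ℝ (Fin n) → ℝ)
    (hmax : ∀ x, IsGreatest (Set.range (F x)) (h x))
    (hPLy : ∀ x y, μ₂ * (h x - F x y) ≤ (1 / 2) * ‖gradient (F x) y‖ ^ 2)
    (x : EuclideanSpace ℝ (Fin n)) (y : EuclideanSpace ℝ (Fin m)) :
    ‖gradient (fun x' => F x' y) x - gradient h x‖ ^ 2
      ≤ (2 * L ^ 2 / μ₂) * (h x - F x y) := by
  have hF : SmoothPLMinimax F h (Real.nnabs L) μ₂ :=
    { differentiable_fst := fun y => hdiff.comp (differentiable_id.prodMk (differentiable_const y))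
      differentiable_snd := fun x => hdiff.comp ((differentiable_const x).prodMk differentiable_id)
      lipschitzWith_gradient_fst := fun y =>
        lipschitzWith_nnabs_of_norm_sub_le fun a b => by simpa using hsmoothx a b y y
      lipschitzWith_gradient_snd := fun x =>
        lipschitzWith_nnabs_of_norm_sub_le fun a b => by simpa using hsmoothy x x a b
      lipschitzWith_gradient_fst_snd := fun x =>
        lipschitzWith_nnabs_of_norm_sub_le fun a b => by simpa using hsmoothx x x a b
      lipschitzWith_gradient_snd_fst := fun y =>
        lipschitzWith_nnabs_of_norm_sub_le fun a b => by simpa using hsmoothy a b y y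
      isGreatest := hmax
      pos := hμ₂
      pl := hPLy }
  obtain ⟨y', hy'⟩ := (hmax x).1
  rw [(hF.hasGradientAt hy').gradient]
  simpa [Real.coe_nnabs, sq_abs] using hF.norm_gradient_fst_sub_sq_le hy' y
end

section
/- Let F : ℝ^n × ℝ^m → ℝ be differentiable and L-smooth (Assumption 1), and suppose for every x the function y ↦ −F(x,y) satisfies the PL condition with constant μ₂ > 0 and argmax_y F(x,y) is nonempty with finite optimal value. Let h(x) = max_y F(x,y). Then for all x, y, ‖∇_yF(x,y)‖² ≤ (2L²/μ₂)·(h(x) − F(x,y)). -/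
/-!
For `f` with `K`-Lipschitz gradient, the function `t ↦ f (y + t • d) - t ⟪∇f y, d⟫ + K t² ‖d‖² / 2`
is monotone on `[0, 1]`, which gives the quadratic lower bound
`f (y + d) ≥ f y + ⟪∇f y, d⟫ - K ‖d‖² / 2`. If moreover `f ≤ M`, the choice `d = ∇f y / K` yields
`‖∇f y‖² ≤ 2K (M - f y)`. Applied to `F x` with `K = |L|`, the PL inequality
`μ₂ (h x - F x y) ≤ ‖∇_y F x y‖² / 2 ≤ |L| (h x - F x y)` then lets one trade a factor `|L|` for `L² / μ₂`.
-/

open scoped NNReal RealInnerProductSpace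

section

variable {E : Type*} [NormedAddCommGroup E] [InnerProductSpace ℝ E] [CompleteSpace E]
  {f : E → ℝ} {K : ℝ≥0}

theorem le_apply_add_of_lipschitzWith_gradient (hf : Differentiable ℝ f)
    (hK : LipschitzWith K (gradient f)) (y d : E) :
    f y + ⟪gradient f y, d⟫ - K / 2 * ‖d‖ ^ 2 ≤ f (y + d) := by
  set ψ : ℝ → ℝ := fun t => f (y + t • d) - t * ⟪gradient f y, d⟫ + K / 2 * t ^ 2 * ‖d‖ ^ 2
  have hψ : ∀ t, HasDerivAt ψ
      (⟪gradient f (y + t • d) - gradient f y, d⟫ + K * t * ‖d‖ ^ 2) t := by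
    intro t
    have hline : HasDerivAt (fun t : ℝ => y + t • d) d t := by
      simpa using ((hasDerivAt_id t).smul_const d).const_add y
    have hcomp := (hf (y + t • d)).hasGradientAt.hasFDerivAt.comp_hasDerivAt t hline
    refine ((hcomp.sub ((hasDerivAt_id t).mul_const ⟪gradient f y, d⟫)).add
      (((hasDerivAt_pow 2 t).const_mul (K / 2 : ℝ)).mul_const (‖d‖ ^ 2))).congr_deriv ?_
    simp only [InnerProductSpace.toDual_apply_apply, inner_sub_left]
    ring
  have hψ_nonneg : ∀ t ∈ interior (Set.Icc (0 : ℝ) 1),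
      0 ≤ ⟪gradient f (y + t • d) - gradient f y, d⟫ + K * t * ‖d‖ ^ 2 := by
    intro t ht
    rw [interior_Icc] at ht
    have hdist : ‖gradient f (y + t • d) - gradient f y‖ ≤ K * (t * ‖d‖) := by
      simpa [← dist_eq_norm, norm_smul, abs_of_pos ht.1] using hK.dist_le_mul (y + t • d) y
    nlinarith [neg_le_of_abs_le (abs_real_inner_le_norm (gradient f (y + t • d) - gradient f y) d),
      norm_nonneg d]
  have hmono := monotoneOn_of_hasDerivWithinAt_nonneg (convex_Icc (0 : ℝ) 1)
    (fun t _ => (hψ t).continuousAt.continuousWithinAt) (fun t _ => (hψ t).hasDerivWithinAt)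
    hψ_nonneg
  have := hmono (Set.left_mem_Icc.2 zero_le_one) (Set.right_mem_Icc.2 zero_le_one) zero_le_one
  simp only [ψ, zero_smul, add_zero, zero_mul, sub_zero, one_smul, one_mul] at this
  linarith

theorem sq_norm_gradient_le_of_forall_le (hf : Differentiable ℝ f)
    (hK : LipschitzWith K (gradient f)) {M : ℝ} (hM : ∀ z, f z ≤ M) (y : E) :
    ‖gradient f y‖ ^ 2 ≤ 2 * K * (M - f y) := by
  set g := gradient f y
  have hstep : ∀ s : ℝ, s * ‖g‖ ^ 2 - K / 2 * s ^ 2 * ‖g‖ ^ 2 ≤ M - f y := fun s => by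
    have := le_apply_add_of_lipschitzWith_gradient hf hK y (s • g)
    rw [real_inner_smul_right, real_inner_self_eq_norm_sq, norm_smul, mul_pow, Real.norm_eq_abs,
      sq_abs] at this
    linarith [hM (y + s • g)]
  rcases K.zero_le_coe.eq_or_lt with hK0 | hKpos
  · -- a bounded-above function with constant gradient has zero gradient
    rw [← hK0] at hstep ⊢
    by_contra! hg
    have := hstep ((M - f y + 1) / ‖g‖ ^ 2)
    rw [div_mul_cancel₀ _ (by linarith)] at this
    linarith
  · have hKpos : (0 : ℝ) < K := hKpos
    have := hstep K⁻¹
    field_simp at this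
    nlinarith

end

theorem grad_y_bound_general (n m : ℕ)
    (F : EuclideanSpace ℝ (Fin n) → EuclideanSpace ℝ (Fin m) → ℝ)
    (L μ₂ : ℝ) (hμ₂ : 0 < μ₂)
    (hdiff : Differentiable ℝ fun p : EuclideanSpace ℝ (Fin n) × EuclideanSpace ℝ (Fin m) =>
      F p.1 p.2)
    (hsmoothy : ∀ x₁ x₂ y₁ y₂,
      ‖gradient (F x₁) y₁ - gradient (F x₂) y₂‖ ≤ L * (‖x₁ - x₂‖ + ‖y₁ - y₂‖))
    (h : EuclideanSpace ℝ (Fin n) → ℝ)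
    (hmax : ∀ x, IsGreatest (Set.range (F x)) (h x))
    (hPLy : ∀ x y, μ₂ * (h x - F x y) ≤ (1 / 2) * ‖gradient (F x) y‖ ^ 2)
    (x : EuclideanSpace ℝ (Fin n)) (y : EuclideanSpace ℝ (Fin m)) :
    ‖gradient (F x) y‖ ^ 2 ≤ (2 * L ^ 2 / μ₂) * (h x - F x y) := by
  have hFx : Differentiable ℝ (F x) :=
    hdiff.comp ((differentiable_const x).prodMk differentiable_id)
  have hLip : LipschitzWith ‖L‖₊ (gradient (F x)) := .of_dist_le_mul fun z₁ z₂ => by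
    simpa [dist_eq_norm] using (hsmoothy x x z₁ z₂).trans
      (mul_le_mul_of_nonneg_right (le_abs_self L) (by positivity))
  have hgrad := sq_norm_gradient_le_of_forall_le hFx hLip (fun z => (hmax x).2 ⟨z, rfl⟩) y
  rw [coe_nnnorm, Real.norm_eq_abs] at hgrad
  have hPL := hPLy x y
  rw [div_mul_eq_mul_div, le_div_iff₀ hμ₂]
  calc ‖gradient (F x) y‖ ^ 2 * μ₂ ≤ 2 * |L| * (μ₂ * (h x - F x y)) := by nlinarith
    _ ≤ 2 * |L| * (|L| * (h x - F x y)) := by gcongr 2 * |L| * ?_; linarith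
    _ = 2 * L ^ 2 * (h x - F x y) := by rw [← sq_abs L]; ring

/-- Under `L`-smoothness of `F` and the `μ₂`-PL condition for `y ↦ −F(x,y)`
(with the max over `y` attained, with value `h(x)`),
`‖∇_yF(x,y)‖² ≤ (2L²/μ₂)(h(x) − F(x,y))`. -/
theorem grad_y_bound (n m : ℕ)
    (F : EuclideanSpace ℝ (Fin n) → EuclideanSpace ℝ (Fin m) → ℝ)
    (L μ₂ : ℝ) (hμ₂ : 0 < μ₂)
    (hdiff : Differentiable ℝ fun p : EuclideanSpace ℝ (Fin n) × EuclideanSpace ℝ (Fin m) =>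
      F p.1 p.2)
    (hsmoothx : ∀ x₁ x₂ y₁ y₂,
      ‖gradient (fun x => F x y₁) x₁ - gradient (fun x => F x y₂) x₂‖
        ≤ L * (‖x₁ - x₂‖ + ‖y₁ - y₂‖))
    (hsmoothy : ∀ x₁ x₂ y₁ y₂,
      ‖gradient (F x₁) y₁ - gradient (F x₂) y₂‖ ≤ L * (‖x₁ - x₂‖ + ‖y₁ - y₂‖))
    (h : EuclideanSpace ℝ (Fin n) → ℝ)
    (hmax : ∀ x, IsGreatest (Set.range (F x)) (h x))
    (hPLy : ∀ x y, μ₂ * (h x - F x y) ≤ (1 / 2) * ‖gradient (F x) y‖ ^ 2)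
    (x : EuclideanSpace ℝ (Fin n)) (y : EuclideanSpace ℝ (Fin m)) :
    ‖gradient (F x) y‖ ^ 2 ≤ (2 * L ^ 2 / μ₂) * (h x - F x y) :=
  grad_y_bound_general n m F L μ₂ hμ₂ hdiff hsmoothy h hmax hPLy x y
end
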